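/- arXiv:2411.01302 — 2 statements merged into one kernel-verified Lean document; each statement's English description precedes it below -/
import Mathlib

section
/- Let Z := ∫_𝒜 e^{Ψ(a)} da and Z' := ∫_𝒜 e^{Ψ'(a)} da, and let π(a) := e^{Ψ(a)}/Z and π'(a) := e^{Ψ'(a)}/Z' be the corresponding Gibbs probability densities on 𝒜. Then d_TV(π, π') ≤ (e^{sup_{a∈𝒜} max(Ψ(a), Ψ'(a))} / Z) · ∫_𝒜 |Ψ(a) − Ψ'(a)| da. -/
/-!
The difference `π - π'` has integral zero, so its integral over `A` equals minus its integral
over `𝒜 \ A`; hence `d_TV(π, π') ≤ ½ ∫_𝒜 |π - π'|`. Normalizing costs at most a factor two in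
`L¹`, because the error `|Z - Z'|` in the normalizing constants is itself bounded by
`∫_𝒜 |e^Ψ - e^Ψ'|`, and pointwise `|e^Ψ - e^Ψ'| ≤ e^{max(Ψ, Ψ')} |Ψ - Ψ'|` by the mean value
theorem.
-/

open MeasureTheory Real

/-- Total variation distance between two densities on `𝒜`:
`d_TV(p,q) = sup_{A ⊆ 𝒜 measurable} |∫_A p − ∫_A q|`. -/
noncomputable def dTV {m : ℕ} (𝒜 : Set (EuclideanSpace ℝ (Fin m)))
    (p q : EuclideanSpace ℝ (Fin m) → ℝ) : ℝ :=
  ⨆ A : {A : Set (EuclideanSpace ℝ (Fin m)) // MeasurableSet A ∧ A ⊆ 𝒜},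
    |(∫ a in A.1, p a) - ∫ a in A.1, q a|

lemma abs_exp_sub_exp_le_exp_max_mul (x y : ℝ) :
    |exp x - exp y| ≤ exp (max x y) * |x - y| := by
  wlog h : y ≤ x generalizing x y
  · rw [abs_sub_comm, max_comm, abs_sub_comm x y]
    exact this y x (le_of_not_ge h)
  rw [abs_of_nonneg (sub_nonneg.2 (exp_le_exp.2 h)), abs_of_nonneg (sub_nonneg.2 h),
    max_eq_left h]
  have hy : exp y = exp x * exp (y - x) := by rw [← exp_add, add_sub_cancel]
  nlinarith [add_one_le_exp (y - x), exp_pos x]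

section

variable {α : Type*} [MeasurableSpace α] {μ : Measure α}

lemma integrableOn_of_forall_abs_le {f : α → ℝ} {s : Set α} {C : ℝ} (hs : MeasurableSet s)
    (hμs : μ s ≠ ⊤) (hf : Measurable f) (hfC : ∀ a ∈ s, |f a| ≤ C) : IntegrableOn f s μ :=
  Measure.integrableOn_of_bounded (M := C) hμs hf.aestronglyMeasurable
    (ae_restrict_of_forall_mem hs hfC)

/-- `∫_A g = -∫_{Aᶜ} g`, so `2 |∫_A g| ≤ ∫_A |g| + ∫_{Aᶜ} |g|`. -/
lemma abs_setIntegral_le_half_integral_abs {g : α → ℝ} (hg : Integrable g μ)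
    (hg0 : ∫ x, g x ∂μ = 0) {A : Set α} (hA : MeasurableSet A) :
    |∫ x in A, g x ∂μ| ≤ (∫ x, |g x| ∂μ) / 2 := by
  have hsplit := integral_add_compl hA hg
  have habs := integral_add_compl hA hg.abs
  have hA_le := abs_integral_le_integral_abs (μ := μ.restrict A) (f := g)
  have hAc_le := abs_integral_le_integral_abs (μ := μ.restrict Aᶜ) (f := g)
  rw [hg0, add_eq_zero_iff_eq_neg] at hsplit
  rw [hsplit, abs_neg] at hA_le ⊢
  linarith

lemma integral_abs_div_integral_sub_div_integral_le {f g : α → ℝ} (hf : Integrable f μ)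
    (hg : Integrable g μ) (hg0 : 0 ≤ᵐ[μ] g) (hZf : 0 < ∫ x, f x ∂μ)
    (hZg : 0 < ∫ x, g x ∂μ) :
    ∫ x, |f x / (∫ y, f y ∂μ) - g x / ∫ y, g y ∂μ| ∂μ ≤
      2 * (∫ x, |f x - g x| ∂μ) / ∫ x, f x ∂μ := by
  set Zf := ∫ y, f y ∂μ
  set Zg := ∫ y, g y ∂μ
  have hZ : |Zg - Zf| ≤ ∫ x, |f x - g x| ∂μ := calc
    |Zg - Zf| = |∫ x, (g x - f x) ∂μ| := by rw [integral_sub hg hf]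
    _ ≤ ∫ x, |g x - f x| ∂μ := abs_integral_le_integral_abs
    _ = ∫ x, |f x - g x| ∂μ := by simp_rw [abs_sub_comm (g _)]
  have hdiff : Integrable (fun x ↦ |f x - g x| / Zf) μ := (hf.sub hg).abs.div_const _
  have hpt : ∀ᵐ x ∂μ, |f x / Zf - g x / Zg| ≤ |f x - g x| / Zf + |Zg - Zf| / (Zf * Zg) * g x := by
    filter_upwards [hg0] with x hx
    have hsplit : f x / Zf - g x / Zg = (f x - g x) / Zf + g x * (Zg - Zf) / (Zf * Zg) := by
      field_simp
      ring
    rw [hsplit]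
    refine (abs_add_le _ _).trans_eq ?_
    rw [abs_div, abs_of_pos hZf, abs_div, abs_mul, abs_of_nonneg hx,
      abs_of_pos (mul_pos hZf hZg)]
    ring
  calc ∫ x, |f x / Zf - g x / Zg| ∂μ
      ≤ ∫ x, (|f x - g x| / Zf + |Zg - Zf| / (Zf * Zg) * g x) ∂μ :=
        integral_mono_ae ((hf.div_const _).sub (hg.div_const _)).abs
          (hdiff.add (hg.const_mul _)) hpt
    _ = ((∫ x, |f x - g x| ∂μ) + |Zg - Zf|) / Zf := by
        rw [integral_add hdiff (hg.const_mul _), integral_div, integral_const_mul]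
        change _ + _ * Zg = _
        field_simp
    _ ≤ 2 * (∫ x, |f x - g x| ∂μ) / Zf := by
        rw [two_mul]
        gcongr

lemma integral_abs_exp_sub_exp_le {f g : α → ℝ} {S : ℝ} (hf : Integrable (fun x ↦ exp (f x)) μ)
    (hg : Integrable (fun x ↦ exp (g x)) μ) (hfg : Integrable (fun x ↦ |f x - g x|) μ)
    (hS : ∀ᵐ x ∂μ, max (f x) (g x) ≤ S) :
    ∫ x, |exp (f x) - exp (g x)| ∂μ ≤ exp S * ∫ x, |f x - g x| ∂μ := by
  rw [← integral_const_mul]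
  refine integral_mono_ae (hf.sub hg).abs (hfg.const_mul _) ?_
  filter_upwards [hS] with x hx
  exact (abs_exp_sub_exp_le_exp_max_mul _ _).trans (by gcongr)

end

lemma dTV_le_half_integral_abs_sub {m : ℕ} {𝒜 : Set (EuclideanSpace ℝ (Fin m))}
    {p q : EuclideanSpace ℝ (Fin m) → ℝ} (hp : IntegrableOn p 𝒜) (hq : IntegrableOn q 𝒜)
    (hpq : ∫ a in 𝒜, p a = ∫ a in 𝒜, q a) :
    dTV 𝒜 p q ≤ (∫ a in 𝒜, |p a - q a|) / 2 := by
  have : Nonempty {A : Set (EuclideanSpace ℝ (Fin m)) // MeasurableSet A ∧ A ⊆ 𝒜} :=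
    ⟨⟨∅, MeasurableSet.empty, Set.empty_subset _⟩⟩
  refine ciSup_le fun ⟨A, hA, hA𝒜⟩ ↦ ?_
  have hrestrict : (volume.restrict 𝒜).restrict A = volume.restrict A := by
    rw [Measure.restrict_restrict hA, Set.inter_eq_left.2 hA𝒜]
  have h := abs_setIntegral_le_half_integral_abs (g := fun a ↦ p a - q a) (hp.sub hq)
    (by rw [integral_sub hp hq, hpq, sub_self]) hA
  rwa [hrestrict, integral_sub (hp.mono_set hA𝒜) (hq.mono_set hA𝒜)] at h

/-- For Gibbs densities `π ∝ e^Ψ`, `π' ∝ e^{Ψ'}` on a compact set `𝒜` with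
`Z = ∫_𝒜 e^Ψ`, one has
`d_TV(π, π') ≤ (e^{sup_𝒜 max(Ψ, Ψ')} / Z) ∫_𝒜 |Ψ − Ψ'|`. -/
theorem stmt0 {m : ℕ}
    (𝒜 : Set (EuclideanSpace ℝ (Fin m)))
    (h𝒜 : IsCompact 𝒜) (h𝒜0 : 0 < volume 𝒜) (h𝒜fin : volume 𝒜 < ⊤)
    (Ψ Ψ' : EuclideanSpace ℝ (Fin m) → ℝ)
    (hΨ : Measurable Ψ) (hΨ' : Measurable Ψ')
    (hΨbdd : ∃ M : ℝ, ∀ a ∈ 𝒜, |Ψ a| ≤ M)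
    (hΨ'bdd : ∃ M : ℝ, ∀ a ∈ 𝒜, |Ψ' a| ≤ M) :
    dTV 𝒜 (fun a => Real.exp (Ψ a) / ∫ a' in 𝒜, Real.exp (Ψ a'))
        (fun a => Real.exp (Ψ' a) / ∫ a' in 𝒜, Real.exp (Ψ' a')) ≤
      Real.exp (sSup ((fun a => max (Ψ a) (Ψ' a)) '' 𝒜)) /
          (∫ a' in 𝒜, Real.exp (Ψ a')) *
        ∫ a in 𝒜, |Ψ a - Ψ' a| := by
  obtain ⟨M, hM⟩ := hΨbdd
  obtain ⟨M', hM'⟩ := hΨ'bdd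
  have h𝒜m : MeasurableSet 𝒜 := h𝒜.measurableSet
  have hintegrable {f : EuclideanSpace ℝ (Fin m) → ℝ} (hf : Measurable f) {C : ℝ}
      (hfC : ∀ a ∈ 𝒜, |f a| ≤ C) : IntegrableOn f 𝒜 :=
    integrableOn_of_forall_abs_le h𝒜m h𝒜fin.ne hf hfC
  have hexp : IntegrableOn (fun a ↦ exp (Ψ a)) 𝒜 := hintegrable hΨ.exp fun a ha ↦ by
    rw [abs_exp]; exact exp_le_exp.2 ((le_abs_self _).trans (hM a ha))
  have hexp' : IntegrableOn (fun a ↦ exp (Ψ' a)) 𝒜 := hintegrable hΨ'.exp fun a ha ↦ by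
    rw [abs_exp]; exact exp_le_exp.2 ((le_abs_self _).trans (hM' a ha))
  have hdiff : IntegrableOn (fun a ↦ |Ψ a - Ψ' a|) 𝒜 := hintegrable (hΨ.sub hΨ').abs fun a ha ↦ by
    rw [abs_abs]; exact (abs_sub _ _).trans (add_le_add (hM a ha) (hM' a ha))
  have hsup : ∀ a ∈ 𝒜, max (Ψ a) (Ψ' a) ≤ sSup ((fun a ↦ max (Ψ a) (Ψ' a)) '' 𝒜) := by
    refine fun a ha ↦ le_csSup ⟨max M M', ?_⟩ ⟨a, ha, rfl⟩
    rintro _ ⟨b, hb, rfl⟩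
    exact max_le_max ((le_abs_self _).trans (hM b hb)) ((le_abs_self _).trans (hM' b hb))
  have : NeZero (volume.restrict 𝒜) := ⟨by simpa [Measure.restrict_apply_univ] using h𝒜0.ne'⟩
  have hZ := integral_exp_pos hexp
  have hZ' := integral_exp_pos hexp'
  calc _ ≤ _ := dTV_le_half_integral_abs_sub (hexp.div_const _) (hexp'.div_const _)
        (by rw [integral_div, integral_div, div_self hZ.ne', div_self hZ'.ne'])
    _ ≤ (∫ a in 𝒜, |exp (Ψ a) - exp (Ψ' a)|) / ∫ a in 𝒜, exp (Ψ a) := by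
        have := integral_abs_div_integral_sub_div_integral_le hexp hexp'
          (ae_of_all _ fun _ ↦ (exp_pos _).le) hZ hZ'
        rw [mul_div_assoc] at this
        linarith
    _ ≤ _ := by
        rw [div_mul_eq_mul_div]
        gcongr
        exact integral_abs_exp_sub_exp_le hexp hexp' hdiff (ae_restrict_of_forall_mem h𝒜m hsup)
end

section
/- For all z, z' ∈ ℝ^d with |z| ≤ C, the log-partition functions satisfy γ · |log(∫_𝒜 exp((f(a)·z' + r(a))/γ) da) − log(∫_𝒜 exp((f(a)·z + r(a))/γ) da)| ≤ (B · exp((3BC + 2R)/γ) + 3B + 2R/C) · |z' − z|. -/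
/-!
The log-partition function `w ↦ log ∫_𝒜 exp ((⟪f a, w⟫ + r a) / γ) da` is `B / γ`-Lipschitz:
`log ∫ exp` is monotone and commutes with adding a constant, so it is `1`-Lipschitz for the
sup-distance between exponents, and moving `w` to `w'` changes each exponent by at most
`‖f a‖ ‖w' - w‖ / γ ≤ B ‖w' - w‖ / γ`. The constant of the statement exceeds `B`.
-/

open MeasureTheory
open scoped RealInnerProductSpace

section LogIntegralExp

variable {α : Type*} [MeasurableSpace α] {μ : Measure α} {s : Set α} {g h : α → ℝ}

lemma integrableOn_exp_of_le (hs : MeasurableSet s) (hμs : μ s < ⊤)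
    (hg : AEStronglyMeasurable g (μ.restrict s)) {M : ℝ} (hgM : ∀ a ∈ s, g a ≤ M) :
    IntegrableOn (fun a => Real.exp (g a)) s μ := by
  refine Integrable.mono' (integrableOn_const (C := Real.exp M) hμs.ne)
    (Real.continuous_exp.comp_aestronglyMeasurable hg) ?_
  filter_upwards [ae_restrict_mem hs] with a ha
  rw [Real.norm_eq_abs, abs_of_pos (Real.exp_pos _)]
  exact Real.exp_le_exp.2 (hgM a ha)

lemma log_setIntegral_exp_le_add (hs : MeasurableSet s) (hμs : μ s ≠ 0)
    (hg : IntegrableOn (fun a => Real.exp (g a)) s μ)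
    (hh : IntegrableOn (fun a => Real.exp (h a)) s μ) {c : ℝ} (hgh : ∀ a ∈ s, g a ≤ h a + c) :
    Real.log (∫ a in s, Real.exp (g a) ∂μ) ≤ Real.log (∫ a in s, Real.exp (h a) ∂μ) + c := by
  have : NeZero (μ.restrict s) := ⟨by simpa using hμs⟩
  have hmono : ∫ a in s, Real.exp (g a) ∂μ ≤ (∫ a in s, Real.exp (h a) ∂μ) * Real.exp c := by
    rw [← integral_mul_const]
    refine setIntegral_mono_on hg (hh.mul_const _) hs fun a ha => ?_
    rw [← Real.exp_add]
    exact Real.exp_le_exp.2 (hgh a ha)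
  calc Real.log (∫ a in s, Real.exp (g a) ∂μ)
      ≤ Real.log ((∫ a in s, Real.exp (h a) ∂μ) * Real.exp c) :=
        Real.log_le_log (integral_exp_pos hg) hmono
    _ = Real.log (∫ a in s, Real.exp (h a) ∂μ) + c := by
        rw [Real.log_mul (integral_exp_pos hh).ne' (Real.exp_pos _).ne', Real.log_exp]

lemma abs_log_setIntegral_exp_sub_le (hs : MeasurableSet s) (hμs : μ s ≠ 0)
    (hg : IntegrableOn (fun a => Real.exp (g a)) s μ)
    (hh : IntegrableOn (fun a => Real.exp (h a)) s μ) {c : ℝ} (hgh : ∀ a ∈ s, |g a - h a| ≤ c) :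
    |Real.log (∫ a in s, Real.exp (g a) ∂μ) - Real.log (∫ a in s, Real.exp (h a) ∂μ)| ≤ c := by
  have hgh' : ∀ a ∈ s, g a ≤ h a + c ∧ h a ≤ g a + c := fun a ha => by
    constructor <;> linarith [abs_le.1 (hgh a ha)]
  rw [abs_sub_le_iff]
  constructor
  · linarith [log_setIntegral_exp_le_add hs hμs hg hh fun a ha => (hgh' a ha).1]
  · linarith [log_setIntegral_exp_le_add hs hμs hh hg fun a ha => (hgh' a ha).2]

end LogIntegralExp

section LogPartition

variable {α E : Type*} [MeasurableSpace α] {μ : Measure α} {s : Set α}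
  [NormedAddCommGroup E] [InnerProductSpace ℝ E] {f : α → E} {r : α → ℝ} {γ B R : ℝ}

lemma integrableOn_exp_inner_add_div (hs : MeasurableSet s) (hμs : μ s < ⊤)
    (hf : AEStronglyMeasurable f (μ.restrict s)) (hr : AEStronglyMeasurable r (μ.restrict s))
    (hγ : 0 < γ) (hfB : ∀ a ∈ s, ‖f a‖ ≤ B) (hrR : ∀ a ∈ s, r a ≤ R) (w : E) :
    IntegrableOn (fun a => Real.exp ((⟪f a, w⟫ + r a) / γ)) s μ := by
  refine integrableOn_exp_of_le hs hμs (by fun_prop) (M := (B * ‖w‖ + R) / γ) fun a ha => ?_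
  gcongr
  · calc ⟪f a, w⟫ ≤ ‖f a‖ * ‖w‖ := real_inner_le_norm _ _
      _ ≤ B * ‖w‖ := by gcongr; exact hfB a ha
  · exact hrR a ha

theorem mul_abs_log_setIntegral_exp_inner_sub_le (hs : MeasurableSet s) (hμs0 : μ s ≠ 0)
    (hμs : μ s < ⊤) (hf : AEStronglyMeasurable f (μ.restrict s))
    (hr : AEStronglyMeasurable r (μ.restrict s)) (hγ : 0 < γ) (hfB : ∀ a ∈ s, ‖f a‖ ≤ B)
    (hrR : ∀ a ∈ s, r a ≤ R) (z z' : E) :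
    γ * |Real.log (∫ a in s, Real.exp ((⟪f a, z'⟫ + r a) / γ) ∂μ) -
        Real.log (∫ a in s, Real.exp ((⟪f a, z⟫ + r a) / γ) ∂μ)| ≤ B * ‖z' - z‖ := by
  have hint := integrableOn_exp_inner_add_div hs hμs hf hr hγ hfB hrR
  have hexp : ∀ a ∈ s, |(⟪f a, z'⟫ + r a) / γ - (⟪f a, z⟫ + r a) / γ| ≤ B * ‖z' - z‖ / γ := by
    intro a ha
    rw [← sub_div, add_sub_add_right_eq_sub, ← inner_sub_right, abs_div, abs_of_pos hγ]
    gcongr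
    calc |⟪f a, z' - z⟫| ≤ ‖f a‖ * ‖z' - z‖ := abs_real_inner_le_norm _ _
      _ ≤ B * ‖z' - z‖ := by gcongr; exact hfB a ha
  calc γ * _ ≤ γ * (B * ‖z' - z‖ / γ) := by
        gcongr; exact abs_log_setIntegral_exp_sub_le hs hμs0 (hint z') (hint z) hexp
    _ = B * ‖z' - z‖ := by field_simp

end LogPartition

theorem stmt5_general {m d : ℕ}
    (𝒜 : Set (EuclideanSpace ℝ (Fin m)))
    (h𝒜 : IsCompact 𝒜) (h𝒜0 : 0 < volume 𝒜)
    (γ C B R : ℝ) (hγ : 0 < γ) (hC : 0 < C) (hB : 0 < B) (hR : 0 < R)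
    (f : EuclideanSpace ℝ (Fin m) → EuclideanSpace ℝ (Fin d))
    (r : EuclideanSpace ℝ (Fin m) → ℝ)
    (hf : Measurable f) (hr : Measurable r)
    (hfB : ∀ a ∈ 𝒜, ‖f a‖ ≤ B) (hrR : ∀ a ∈ 𝒜, |r a| ≤ R)
    (z z' : EuclideanSpace ℝ (Fin d)) :
    γ * |Real.log (∫ a in 𝒜, Real.exp ((⟪f a, z'⟫ + r a) / γ)) -
          Real.log (∫ a in 𝒜, Real.exp ((⟪f a, z⟫ + r a) / γ))| ≤
      (B * Real.exp ((3 * B * C + 2 * R) / γ) + 3 * B + 2 * R / C) * ‖z' - z‖ := by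
  have hLip := mul_abs_log_setIntegral_exp_inner_sub_le h𝒜.measurableSet h𝒜0.ne'
    h𝒜.measure_lt_top hf.aestronglyMeasurable hr.aestronglyMeasurable hγ hfB
    (fun a ha => (abs_le.1 (hrR a ha)).2) z z'
  have hB_le : B ≤ B * Real.exp ((3 * B * C + 2 * R) / γ) + 3 * B + 2 * R / C := by
    have hB_exp : B ≤ B * Real.exp ((3 * B * C + 2 * R) / γ) :=
      le_mul_of_one_le_right hB.le (Real.one_le_exp (by positivity))
    have : 0 ≤ 3 * B + 2 * R / C := by positivity
    linarith
  exact hLip.trans (mul_le_mul_of_nonneg_right hB_le (norm_nonneg _))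

theorem stmt5 {m d : ℕ}
    (𝒜 : Set (EuclideanSpace ℝ (Fin m)))
    (h𝒜 : IsCompact 𝒜) (h𝒜0 : 0 < volume 𝒜) (h𝒜fin : volume 𝒜 < ⊤)
    (γ C B R : ℝ) (hγ : 0 < γ) (hC : 0 < C) (hB : 0 < B) (hR : 0 < R)
    (f : EuclideanSpace ℝ (Fin m) → EuclideanSpace ℝ (Fin d))
    (r : EuclideanSpace ℝ (Fin m) → ℝ)
    (hf : Measurable f) (hr : Measurable r)
    (hfB : ∀ a ∈ 𝒜, ‖f a‖ ≤ B) (hrR : ∀ a ∈ 𝒜, |r a| ≤ R)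
    (z z' : EuclideanSpace ℝ (Fin d)) (hz : ‖z‖ ≤ C) :
    γ * |Real.log (∫ a in 𝒜, Real.exp ((⟪f a, z'⟫ + r a) / γ)) -
          Real.log (∫ a in 𝒜, Real.exp ((⟪f a, z⟫ + r a) / γ))| ≤
      (B * Real.exp ((3 * B * C + 2 * R) / γ) + 3 * B + 2 * R / C) * ‖z' - z‖ :=
  stmt5_general 𝒜 h𝒜 h𝒜0 γ C B R hγ hC hB hR f r hf hr hfB hrR z z'
end
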